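/- Assume K = K̃ and suppose the offspring distributions q, q̃ have finite exponential moments (E[e^{sξ}] < ∞ for some s > 0 when ξ is distributed according to q, respectively q̃). For every compact set C contained in the open first quadrant (0,∞)² and every a > 0, there exist w > 0 and K₀ > 0 such that for all K ∈ (0, K₀) and all integers m, n ≥ 1 with (K·m, K·n) ∈ C, the one-step transition from (m, n) satisfies P( |K·U₁ − (K m)·exp(r − K m − b·K n)| > a or |K·V₁ − (K n)·exp(r̃ − a·K m − K n)| > a | (U₀,V₀) = (m,n) ) ≤ exp(−w/K); that is, the normed chain (K U_t, K V_t) follows the deterministic Ricker competition map F up to error a with probability at least 1 − e^{−w/K}. -/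

import Mathlib

open Filter

/-- The modified offspring distribution: given inhibition exponent c, the litter size has
P(ξ = k) = e^{−c}·q(k) for k ≥ 1 and P(ξ = 0) = 1 − e^{−c}·(1 − q(0)). -/
noncomputable def modPMF (c : ℝ) (q : ℕ → ℝ) : ℕ → ℝ :=
  fun k => if k = 0 then 1 - Real.exp (-c) * (1 - q 0) else Real.exp (-c) * q k

/-- `convPow f m` is the m-fold convolution power of the pmf `f` on ℕ: the distribution of
the sum of m i.i.d. random variables with pmf `f` (the point mass at 0 when m = 0). -/
noncomputable def convPow (f : ℕ → ℝ) : ℕ → ℕ → ℝ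
  | 0, k => if k = 0 then 1 else 0
  | m + 1, k => ∑ i ∈ Finset.range (k + 1), f i * convPow f m (k - i)

/-- The transition probabilities of the stochastic Ricker competition chain (U_t, V_t) on
ℤ_{≥0}²: from (m,n), U_{t+1} is a sum of m i.i.d. litters with pmf `modPMF (K(m+bn)) q` and,
independently, V_{t+1} is a sum of n i.i.d. litters with pmf `modPMF (K̃(am+n)) q̃`
(a coordinate equal to 0 stays 0). -/
noncomputable def rickerKernel (a b K K' : ℝ) (q q' : ℕ → ℝ) :
    ℕ × ℕ → ℕ × ℕ → ℝ :=
  fun p p' =>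
    convPow (modPMF (K * ((p.1 : ℝ) + b * (p.2 : ℝ))) q) p.1 p'.1 *
    convPow (modPMF (K' * (a * (p.1 : ℝ) + (p.2 : ℝ))) q') p.2 p'.2

/-- t-step transition probabilities of a Markov kernel on ℤ_{≥0}². -/
noncomputable def kernelPow (P : ℕ × ℕ → ℕ × ℕ → ℝ) : ℕ → ℕ × ℕ → ℕ × ℕ → ℝ
  | 0, p, p' => if p = p' then 1 else 0
  | t + 1, p, p' => ∑' s : ℕ × ℕ, P p s * kernelPow P t s p'

/-! From a state (m, n) the two coordinates of the next state are independent, and each is a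
sum of m (resp. n) i.i.d. litters whose mean e^{-c} e^r is exactly the factor of the Ricker
map. The exponential moment gives E e^{tξ} ≤ 1 + t E ξ + A t² for |t| ≤ σ, and thinning by
e^{-c} ≤ 1 preserves this in the form E e^{tξ_c} ≤ exp (t E ξ_c + A t²), uniformly in the
inhibition exponent c ≥ 0. A two-sided Chernoff bound then gives probability at most
2 exp (m A s² - s ε / K) for a deviation of K U₁ by more than ε. Since K m stays bounded on C,
a small s makes the exponent at most -s ε / (2K); a union bound over the two coordinates
and K small enough to absorb the constant 4 finish the proof. -/

open Real

theorem exp_sub_one_sub_le_sq_mul_exp_abs (x : ℝ) : exp x - 1 - x ≤ x ^ 2 * exp |x| := by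
  have hexp : 1 ≤ exp |x| := one_le_exp (abs_nonneg x)
  rcases le_or_gt |x| 1 with hx | hx
  · nlinarith [le_abs_self (exp x - 1 - x), abs_exp_sub_one_sub_id_le hx, sq_nonneg x]
  · have hsq : 1 ≤ x ^ 2 := by nlinarith [sq_abs x]
    rcases le_or_gt x 0 with h | h
    · nlinarith [exp_le_one_iff.mpr h, abs_of_nonpos h, sq_abs x]
    · rw [abs_of_pos h]
      nlinarith [exp_pos x]

theorem one_le_exp_add_exp_of_lt_abs {s δ x : ℝ} (hs : 0 ≤ s) (hx : δ < |x|) :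
    1 ≤ exp (s * x - s * δ) + exp (-(s * x) - s * δ) := by
  rcases lt_abs.mp hx with h | h
  · nlinarith [one_le_exp (show 0 ≤ s * x - s * δ by nlinarith), exp_pos (-(s * x) - s * δ)]
  · nlinarith [one_le_exp (show 0 ≤ -(s * x) - s * δ by nlinarith), exp_pos (s * x - s * δ)]

theorem four_mul_exp_neg_div_le {w K : ℝ} (hK : 0 < K) (hKw : K ≤ w / 4) :
    4 * exp (-w / K) ≤ exp (-(w / 2) / K) := by
  have hsplit : exp (-w / K) = exp (-(w / 2) / K) * exp (-(w / 2) / K) := by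
    rw [← exp_add]; congr 1; ring
  have hsmall : exp (-(w / 2) / K) ≤ exp (-2) := by
    gcongr
    rw [neg_div, neg_le_neg_iff, le_div_iff₀ hK]
    linarith
  have hfour : 4 * exp (-2) ≤ 1 := by
    have h2 : exp (-2) * (exp 1 * exp 1) = 1 := by simp only [← exp_add]; norm_num
    have h4 : 4 ≤ exp 1 * exp 1 := by nlinarith [add_one_le_exp 1]
    nlinarith [mul_le_mul_of_nonneg_left h4 (exp_pos (-2)).le]
  rw [hsplit]
  nlinarith [exp_pos (-(w / 2) / K)]

theorem modPMF_nonneg {c : ℝ} (hc : 0 ≤ c) {q : ℕ → ℝ} (hq : ∀ k, 0 ≤ q k) (hq0 : q 0 ≤ 1)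
    (k : ℕ) : 0 ≤ modPMF c q k := by
  have h1 : exp (-c) ≤ 1 := exp_le_one_iff.mpr (by linarith)
  unfold modPMF
  split
  · nlinarith [mul_le_mul_of_nonneg_right h1 (sub_nonneg.mpr hq0), hq 0]
  · exact mul_nonneg (exp_pos _).le (hq k)

theorem hasSum_exp_mul_modPMF {q : ℕ → ℝ} {t Q : ℝ}
    (hQ : HasSum (fun k : ℕ => exp (t * k) * q k) Q) (c : ℝ) :
    HasSum (fun k : ℕ => exp (t * k) * modPMF c q k) (1 + exp (-c) * (Q - 1)) := by
  rw [show 1 + exp (-c) * (Q - 1) = exp (-c) * Q + (1 - exp (-c)) by ring]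
  refine ((hQ.mul_left _).add (hasSum_ite_eq 0 _)).congr_fun fun k => ?_
  rcases eq_or_ne k 0 with rfl | hk
  · simp [modPMF]; ring
  · simp [modPMF, hk]; ring

theorem convPow_nonneg {f : ℕ → ℝ} (hf : ∀ k, 0 ≤ f k) (m k : ℕ) : 0 ≤ convPow f m k := by
  induction m generalizing k with
  | zero => simp only [convPow]; split <;> norm_num
  | succ m ih => exact Finset.sum_nonneg fun i _ => mul_nonneg (hf i) (ih _)

theorem hasSum_exp_mul_convPow {f : ℕ → ℝ} (hf : ∀ k, 0 ≤ f k) {t M : ℝ}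
    (hM : HasSum (fun k : ℕ => exp (t * k) * f k) M) (m : ℕ) :
    HasSum (fun k : ℕ => exp (t * k) * convPow f m k) (M ^ m) := by
  induction m with
  | zero =>
    rw [pow_zero]
    refine (hasSum_ite_eq 0 (1 : ℝ)).congr_fun fun k => ?_
    rcases eq_or_ne k 0 with rfl | hk <;> simp [convPow, *]
  | succ m ih =>
    have hnorm {g : ℕ → ℝ} (hg : ∀ k, 0 ≤ g k) {N : ℝ}
        (h : HasSum (fun k : ℕ => exp (t * k) * g k) N) :
        Summable fun k : ℕ => ‖exp (t * k) * g k‖ :=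
      h.summable.congr fun k => (norm_of_nonneg (mul_nonneg (exp_pos _).le (hg k))).symm
    have hprod := hasSum_sum_range_mul_of_summable_norm (hnorm hf hM)
      (hnorm (convPow_nonneg hf m) ih)
    rw [hM.tsum_eq, ih.tsum_eq, ← pow_succ'] at hprod
    refine hprod.congr_fun fun n => ?_
    simp only [convPow, Finset.mul_sum]
    refine Finset.sum_congr rfl fun i hi => ?_
    have hin : i ≤ n := Nat.lt_succ_iff.mp (Finset.mem_range.mp hi)
    rw [Nat.cast_sub hin, show t * n = t * i + t * (n - i) by ring, exp_add]
    ring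

theorem hasSum_convPow_modPMF {c : ℝ} (hc : 0 ≤ c) {q : ℕ → ℝ} (hq : ∀ k, 0 ≤ q k)
    (hq1 : HasSum q 1) (m : ℕ) : HasSum (convPow (modPMF c q) m) 1 := by
  have h := hasSum_exp_mul_convPow (modPMF_nonneg hc hq (le_hasSum hq1 0 fun j _ => hq j))
    (hasSum_exp_mul_modPMF (t := 0) (Q := 1) (by simpa using hq1) c) m
  simpa using h

theorem tsum_ite_lt_abs_sub_le {g : ℕ → ℝ} (hg : ∀ k, 0 ≤ g k) {s μ V δ M M' : ℝ}
    (hs : 0 ≤ s)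
    (hM : HasSum (fun k : ℕ => exp (s * k) * g k) M) (hMle : M ≤ exp (s * μ + V * s ^ 2))
    (hM' : HasSum (fun k : ℕ => exp (-s * k) * g k) M') (hM'le : M' ≤ exp (-s * μ + V * s ^ 2)) :
    ∑' k : ℕ, (if δ < |(k : ℝ) - μ| then g k else 0) ≤ 2 * exp (V * s ^ 2 - s * δ) := by
  set a := exp (-(s * μ) - s * δ)
  set a' := exp (s * μ - s * δ)
  have hbound := (hM.mul_left a).add (hM'.mul_left a')
  have hle : ∀ k : ℕ, (if δ < |(k : ℝ) - μ| then g k else 0)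
      ≤ a * (exp (s * k) * g k) + a' * (exp (-s * k) * g k) := by
    intro k
    have hak : a * exp (s * k) = exp (s * (k - μ) - s * δ) := by
      rw [← exp_add]; congr 1; ring
    have ha'k : a' * exp (-s * k) = exp (-(s * (k - μ)) - s * δ) := by
      rw [← exp_add]; congr 1; ring
    split_ifs with h
    · calc g k ≤ (exp (s * (k - μ) - s * δ) + exp (-(s * (k - μ)) - s * δ)) * g k :=
            le_mul_of_one_le_left (hg k) (one_le_exp_add_exp_of_lt_abs hs h)
        _ = _ := by rw [← hak, ← ha'k]; ring
    · have := hg k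
      positivity
  have hnonneg : ∀ k : ℕ, 0 ≤ (if δ < |(k : ℝ) - μ| then g k else 0) :=
    fun k => ite_nonneg (hg k) le_rfl
  calc ∑' k : ℕ, (if δ < |(k : ℝ) - μ| then g k else 0)
      ≤ a * M + a' * M' :=
        hasSum_le hle (Summable.of_nonneg_of_le hnonneg hle hbound.summable).hasSum hbound
    _ ≤ a * exp (s * μ + V * s ^ 2) + a' * exp (-s * μ + V * s ^ 2) := by gcongr
    _ = 2 * exp (V * s ^ 2 - s * δ) := by
        simp only [a, a', ← exp_add]
        rw [two_mul]
        congr 2 <;> ring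

theorem one_add_exp_neg_mul_sub_one_pow_le {c t E A Q : ℝ} (hc : 0 ≤ c) (hA : 0 ≤ A)
    (hQ : 0 ≤ Q) (hQle : Q ≤ 1 + t * E + A * t ^ 2) (m : ℕ) :
    (1 + exp (-c) * (Q - 1)) ^ m ≤ exp (t * (m * (exp (-c) * E)) + m * A * t ^ 2) := by
  have he : exp (-c) ≤ 1 := exp_le_one_iff.mpr (by linarith)
  have he0 := exp_pos (-c)
  have hbase : 1 + exp (-c) * (Q - 1) ≤ exp (t * (exp (-c) * E) + A * t ^ 2) := by
    have hAt : exp (-c) * (A * t ^ 2) ≤ A * t ^ 2 := mul_le_of_le_one_left (by positivity) he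
    nlinarith [add_one_le_exp (t * (exp (-c) * E) + A * t ^ 2)]
  calc (1 + exp (-c) * (Q - 1)) ^ m ≤ exp (t * (exp (-c) * E) + A * t ^ 2) ^ m :=
        pow_le_pow_left₀ (by nlinarith) hbase m
    _ = _ := by rw [← exp_nat_mul]; congr 1; ring

theorem exists_hasSum_exp_mul_le_one_add {q : ℕ → ℝ} (hq : ∀ k, 0 ≤ q k) (hq1 : HasSum q 1)
    {E : ℝ} (hmean : HasSum (fun k : ℕ => (k : ℝ) * q k) E)
    (hexp : ∃ s : ℝ, 0 < s ∧ Summable (fun k : ℕ => exp (s * k) * q k)) :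
    ∃ σ > 0, ∃ A ≥ 0, ∀ t, |t| ≤ σ →
      ∃ Q, HasSum (fun k : ℕ => exp (t * k) * q k) Q ∧ Q ≤ 1 + t * E + A * t ^ 2 := by
  obtain ⟨s, hs, hS⟩ := hexp
  -- halving the exponent leaves room to absorb `k ^ 2` into `exp (σ * k)`
  set σ := s / 2
  have hσ : 0 < σ := by positivity
  have hA : Summable fun k : ℕ => (k : ℝ) ^ 2 * exp (σ * k) * q k := by
    refine Summable.of_nonneg_of_le (fun k => by have := hq k; positivity) (fun k => ?_)
      (hS.mul_left (2 / σ ^ 2))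
    have hk : (k : ℝ) ^ 2 ≤ 2 / σ ^ 2 * exp (σ * k) := by
      have h := pow_div_factorial_le_exp (σ * k) (by positivity) 2
      norm_num [Nat.factorial] at h
      rw [div_mul_eq_mul_div, le_div_iff₀ (by positivity)]
      nlinarith
    have hs2 : exp (s * k) = exp (σ * k) * exp (σ * k) := by
      rw [← exp_add]; congr 1; ring
    calc (k : ℝ) ^ 2 * exp (σ * k) * q k ≤ 2 / σ ^ 2 * exp (σ * k) * exp (σ * k) * q k := by
          gcongr; exact hq k
      _ = 2 / σ ^ 2 * (exp (s * k) * q k) := by rw [hs2]; ring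
  refine ⟨σ, hσ, ∑' k : ℕ, (k : ℝ) ^ 2 * exp (σ * k) * q k,
    tsum_nonneg fun k => by have := hq k; positivity, fun t ht => ?_⟩
  have hsum : Summable fun k : ℕ => exp (t * k) * q k := by
    refine Summable.of_nonneg_of_le (fun k => by have := hq k; positivity) (fun k => ?_) hS
    have hts : t * k ≤ s * k :=
      mul_le_mul_of_nonneg_right (by linarith [le_abs_self t, show σ = s / 2 from rfl])
        k.cast_nonneg
    gcongr
    exact hq k
  refine ⟨_, hsum.hasSum, ?_⟩
  have hdiff : HasSum (fun k : ℕ => (exp (t * k) - 1 - t * k) * q k)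
      (∑' k : ℕ, exp (t * k) * q k - 1 - t * E) :=
    ((hsum.hasSum.sub hq1).sub (hmean.mul_left t)).congr_fun fun k => by ring
  have hle : ∀ k : ℕ, (exp (t * k) - 1 - t * k) * q k
      ≤ t ^ 2 * ((k : ℝ) ^ 2 * exp (σ * k) * q k) := by
    intro k
    have htk : |t * k| ≤ σ * k := by
      rw [abs_mul, Nat.abs_cast]
      gcongr
    calc (exp (t * k) - 1 - t * k) * q k ≤ ((t * k) ^ 2 * exp |t * k|) * q k :=
          mul_le_mul_of_nonneg_right (exp_sub_one_sub_le_sq_mul_exp_abs _) (hq k)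
      _ ≤ ((t * k) ^ 2 * exp (σ * k)) * q k := by gcongr; exact hq k
      _ = _ := by ring
  linarith [hasSum_le hle hdiff (hA.hasSum.mul_left (t ^ 2))]

theorem tsum_ite_lt_abs_sub_convPow_modPMF_le {q : ℕ → ℝ} (hq : ∀ k, 0 ≤ q k) (hq0 : q 0 ≤ 1)
    {E σ A : ℝ} (hA : 0 ≤ A)
    (hmgf : ∀ t, |t| ≤ σ →
      ∃ Q, HasSum (fun k : ℕ => exp (t * k) * q k) Q ∧ Q ≤ 1 + t * E + A * t ^ 2)
    {c s : ℝ} (hc : 0 ≤ c) (hs : 0 ≤ s) (hsσ : s ≤ σ) (m : ℕ) (δ : ℝ) :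
    ∑' j : ℕ, (if δ < |(j : ℝ) - m * (exp (-c) * E)| then convPow (modPMF c q) m j else 0)
      ≤ 2 * exp (m * A * s ^ 2 - s * δ) := by
  have hmgf_convPow : ∀ t, |t| ≤ σ → ∃ M,
      HasSum (fun k : ℕ => exp (t * k) * convPow (modPMF c q) m k) M ∧
        M ≤ exp (t * (m * (exp (-c) * E)) + m * A * t ^ 2) := by
    intro t ht
    obtain ⟨Q, hQ, hQle⟩ := hmgf t ht
    exact ⟨_, hasSum_exp_mul_convPow (modPMF_nonneg hc hq hq0) (hasSum_exp_mul_modPMF hQ c) m,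
      one_add_exp_neg_mul_sub_one_pow_le hc hA (hQ.nonneg fun k => by have := hq k; positivity)
        hQle m⟩
  obtain ⟨M, hM, hMle⟩ := hmgf_convPow s (by rwa [abs_of_nonneg hs])
  obtain ⟨M', hM', hM'le⟩ := hmgf_convPow (-s) (by rwa [abs_neg, abs_of_nonneg hs])
  rw [neg_sq] at hM'le
  exact tsum_ite_lt_abs_sub_le (convPow_nonneg (modPMF_nonneg hc hq hq0) m) hs hM hMle hM' hM'le

theorem exists_tsum_ite_lt_abs_sub_convPow_modPMF_le {q : ℕ → ℝ} (hq : ∀ k, 0 ≤ q k)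
    (hq1 : HasSum q 1) {E : ℝ} (hmean : HasSum (fun k : ℕ => (k : ℝ) * q k) E)
    (hexp : ∃ s : ℝ, 0 < s ∧ Summable (fun k : ℕ => exp (s * k) * q k)) (R : ℝ) {ε : ℝ}
    (hε : 0 < ε) :
    ∃ w > 0, ∀ K > 0, ∀ (m : ℕ) (c : ℝ), 0 ≤ c → K * m ≤ R →
      ∑' j : ℕ, (if ε < |K * j - K * m * (exp (-c) * E)| then convPow (modPMF c q) m j else 0)
        ≤ 2 * exp (-w / K) := by
  obtain ⟨σ, hσ, A, hA, hmgf⟩ := exists_hasSum_exp_mul_le_one_add hq hq1 hmean hexp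
  set s := min σ (ε / (2 * (|R| * A + 1)))
  have hs : 0 < s := lt_min hσ (by positivity)
  refine ⟨s * ε / 2, by positivity, fun K hK m c hc hKm => ?_⟩
  have hevent : ∀ j : ℕ, ε < |K * j - K * m * (exp (-c) * E)| ↔
      ε / K < |(j : ℝ) - m * (exp (-c) * E)| := fun j => by
    rw [mul_assoc K, ← mul_sub, abs_mul, abs_of_pos hK, div_lt_iff₀' hK]
  simp only [hevent]
  refine (tsum_ite_lt_abs_sub_convPow_modPMF_le hq (le_hasSum hq1 0 fun j _ => hq j) hA hmgf hc
    hs.le (min_le_left _ _) m (ε / K)).trans ?_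
  have hKmAs : K * m * A * s ≤ ε / 2 :=
    calc K * m * A * s ≤ |R| * A * s := by gcongr; exact hKm.trans (le_abs_self R)
      _ ≤ (|R| * A + 1) * s := by nlinarith
      _ ≤ ε / 2 := by
        rw [← le_div_iff₀' (by positivity), div_div]
        exact min_le_right _ _
  gcongr
  calc (m : ℝ) * A * s ^ 2 - s * (ε / K) = (K * m * A * s - ε) * s / K := by
        field_simp
    _ ≤ (ε / 2 - ε) * s / K := by gcongr
    _ = -(s * ε / 2) / K := by ring

theorem tsum_ite_or_mul_le {α β : Type*} {f : α → ℝ} {g : β → ℝ} (hf : ∀ i, 0 ≤ f i)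
    (hg : ∀ j, 0 ≤ g j) (hf1 : HasSum f 1) (hg1 : HasSum g 1) (p : α → Prop) (p' : β → Prop)
    [DecidablePred p] [DecidablePred p'] :
    ∑' x : α × β, (if p x.1 ∨ p' x.2 then f x.1 * g x.2 else 0)
      ≤ (∑' i, if p i then f i else 0) + ∑' j, if p' j then g j else 0 := by
  set u := fun i => if p i then f i else 0
  set v := fun j => if p' j then g j else 0
  have hu0 : ∀ i, 0 ≤ u i := fun i => ite_nonneg (hf i) le_rfl
  have hv0 : ∀ j, 0 ≤ v j := fun j => ite_nonneg (hg j) le_rfl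
  have hu : Summable u := Summable.of_nonneg_of_le hu0
    (fun i => by simp only [u]; split_ifs <;> simp [hf i]) hf1.summable
  have hv : Summable v := Summable.of_nonneg_of_le hv0
    (fun j => by simp only [v]; split_ifs <;> simp [hg j]) hg1.summable
  have hbound := (hu.hasSum.mul hg1 (hu.mul_of_nonneg hg1.summable hu0 hg)).add
    (hf1.mul hv.hasSum (hf1.summable.mul_of_nonneg hv hf hv0))
  have hle : ∀ x : α × β, (if p x.1 ∨ p' x.2 then f x.1 * g x.2 else 0)
      ≤ u x.1 * g x.2 + f x.1 * v x.2 := by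
    rintro ⟨i, j⟩
    have := hf i; have := hg j
    by_cases hi : p i <;> by_cases hj : p' j <;> simp [u, v, hi, hj]
    positivity
  have hnonneg : ∀ x : α × β, 0 ≤ (if p x.1 ∨ p' x.2 then f x.1 * g x.2 else 0) :=
    fun x => ite_nonneg (mul_nonneg (hf x.1) (hg x.2)) le_rfl
  calc ∑' x : α × β, (if p x.1 ∨ p' x.2 then f x.1 * g x.2 else 0)
      ≤ (∑' i, u i) * 1 + 1 * ∑' j, v j :=
        hasSum_le hle (Summable.of_nonneg_of_le hnonneg hle hbound.summable).hasSum hbound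
    _ = _ := by ring

theorem normed_chain_follows_deterministic_map_general
    (r r' a b : ℝ) (ha : 0 < a) (hb : 0 < b)
    (q q' : ℕ → ℝ)
    (hq : ∀ k, 0 ≤ q k) (hq1 : HasSum q 1)
    (hqmean : HasSum (fun k : ℕ => (k : ℝ) * q k) (Real.exp r))
    (hqexp : ∃ s : ℝ, 0 < s ∧ Summable (fun k : ℕ => Real.exp (s * k) * q k))
    (hq' : ∀ k, 0 ≤ q' k) (hq1' : HasSum q' 1)
    (hqmean' : HasSum (fun k : ℕ => (k : ℝ) * q' k) (Real.exp r'))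
    (hqexp' : ∃ s : ℝ, 0 < s ∧ Summable (fun k : ℕ => Real.exp (s * k) * q' k))
    (C : Set (ℝ × ℝ)) (hC : IsCompact C)
    (ε : ℝ) (hε : 0 < ε) :
    ∃ w : ℝ, 0 < w ∧ ∃ K₀ : ℝ, 0 < K₀ ∧
      ∀ K : ℝ, 0 < K → K < K₀ →
        ∀ m n : ℕ, 1 ≤ m → 1 ≤ n → ((K * m : ℝ), (K * n : ℝ)) ∈ C →
          (∑' p' : ℕ × ℕ,
            if ε < |K * (p'.1 : ℝ) - K * m * Real.exp (r - K * m - b * (K * n))| ∨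
               ε < |K * (p'.2 : ℝ) - K * n * Real.exp (r' - a * (K * m) - K * n)|
            then rickerKernel a b K K q q' (m, n) p' else 0)
          ≤ Real.exp (-w / K) := by
  obtain ⟨R, hR⟩ := hC.isBounded.exists_norm_le
  obtain ⟨w₁, hw₁, htail₁⟩ :=
    exists_tsum_ite_lt_abs_sub_convPow_modPMF_le hq hq1 hqmean hqexp R hε
  obtain ⟨w₂, hw₂, htail₂⟩ :=
    exists_tsum_ite_lt_abs_sub_convPow_modPMF_le hq' hq1' hqmean' hqexp' R hε
  set w := min w₁ w₂
  have hw : 0 < w := lt_min hw₁ hw₂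
  refine ⟨w / 2, by positivity, w / 4, by positivity, fun K hK hKw m n _ _ hmn => ?_⟩
  have hKm : K * m ≤ R := (le_abs_self _).trans ((norm_fst_le _).trans (hR _ hmn))
  have hKn : K * n ≤ R := (le_abs_self _).trans ((norm_snd_le _).trans (hR _ hmn))
  have hF₁ : exp (r - K * m - b * (K * n)) = exp (-(K * (m + b * n))) * exp r := by
    rw [← exp_add]; congr 1; ring
  have hF₂ : exp (r' - a * (K * m) - K * n) = exp (-(K * (a * m + n))) * exp r' := by
    rw [← exp_add]; congr 1; ring
  have hc₁ : 0 ≤ K * (m + b * n) := by positivity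
  have hc₂ : 0 ≤ K * (a * m + n) := by positivity
  simp only [rickerKernel, hF₁, hF₂]
  calc _ ≤ _ := tsum_ite_or_mul_le
        (convPow_nonneg (modPMF_nonneg hc₁ hq (le_hasSum hq1 0 fun j _ => hq j)) m)
        (convPow_nonneg (modPMF_nonneg hc₂ hq' (le_hasSum hq1' 0 fun j _ => hq' j)) n)
        (hasSum_convPow_modPMF hc₁ hq hq1 m) (hasSum_convPow_modPMF hc₂ hq' hq1' n) _ _
    _ ≤ 2 * exp (-w₁ / K) + 2 * exp (-w₂ / K) :=
        add_le_add (htail₁ K hK m _ hc₁ hKm) (htail₂ K hK n _ hc₂ hKn)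
    _ ≤ 4 * exp (-w / K) := by
        have h₁ : exp (-w₁ / K) ≤ exp (-w / K) := by gcongr; exact min_le_left _ _
        have h₂ : exp (-w₂ / K) ≤ exp (-w / K) := by gcongr; exact min_le_right _ _
        linarith
    _ ≤ exp (-(w / 2) / K) := four_mul_exp_neg_div_le hK hKw.le

/-- (K = K̃.) On any compact set C inside the open first quadrant and for any error
level ε > 0 there are w > 0 and K₀ > 0 such that for every K ∈ (0, K₀) and every
all-positive state (m,n) with (Km, Kn) ∈ C, the probability that one step of the normed
chain (K U₁, K V₁) deviates from the deterministic Ricker competition map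
F(x,y) = (x e^{r−x−by}, y e^{r̃−ax−y}) (applied at (x,y) = (Km, Kn)) by more than ε in
either coordinate is at most e^{−w/K}. -/
theorem normed_chain_follows_deterministic_map
    (r r' a b : ℝ) (ha : 0 < a) (hb : 0 < b)
    (q q' : ℕ → ℝ)
    (hq : ∀ k, 0 ≤ q k) (hq1 : HasSum q 1)
    (hqmean : HasSum (fun k : ℕ => (k : ℝ) * q k) (Real.exp r))
    (hqexp : ∃ s : ℝ, 0 < s ∧ Summable (fun k : ℕ => Real.exp (s * k) * q k))
    (hq' : ∀ k, 0 ≤ q' k) (hq1' : HasSum q' 1)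
    (hqmean' : HasSum (fun k : ℕ => (k : ℝ) * q' k) (Real.exp r'))
    (hqexp' : ∃ s : ℝ, 0 < s ∧ Summable (fun k : ℕ => Real.exp (s * k) * q' k))
    (C : Set (ℝ × ℝ)) (hC : IsCompact C) (hCpos : C ⊆ Set.Ioi 0 ×ˢ Set.Ioi 0)
    (ε : ℝ) (hε : 0 < ε) :
    ∃ w : ℝ, 0 < w ∧ ∃ K₀ : ℝ, 0 < K₀ ∧
      ∀ K : ℝ, 0 < K → K < K₀ →
        ∀ m n : ℕ, 1 ≤ m → 1 ≤ n → ((K * m : ℝ), (K * n : ℝ)) ∈ C →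
          (∑' p' : ℕ × ℕ,
            if ε < |K * (p'.1 : ℝ) - K * m * Real.exp (r - K * m - b * (K * n))| ∨
               ε < |K * (p'.2 : ℝ) - K * n * Real.exp (r' - a * (K * m) - K * n)|
            then rickerKernel a b K K q q' (m, n) p' else 0)
          ≤ Real.exp (-w / K) :=
  normed_chain_follows_deterministic_map_general r r' a b ha hb q q' hq hq1 hqmean hqexp hq' hq1'
    hqmean' hqexp' C hC ε hε
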